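/- arXiv:1910.07245 — 6 statements merged into one kernel-verified Lean document; each statement's English description precedes it below -/
import Mathlib

section
/- For every locally integrable function f on ℝⁿ, every α > 0, and every x ∈ ℝⁿ, the Hardy–Littlewood maximal function of the indicator of the level set {Mf > α} satisfies M(χ_{{Mf>α}})(x) ≤ (9^n / α) · Mf(x). -/
/-!
Fix a cube `Q ∋ x` of radius `r` and let `E = {M f > α}`. If some cube of radius `≥ r` on which
`|f|` has average `> α` meets `Q`, its triple contains `x`, so already `α ≤ 3ⁿ M f(x)`. Otherwise
every point of `E ∩ Q` lies in such a cube of radius `≤ r`, hence inside `3Q`, and the Vitali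
covering lemma with enlargement `τ > 3` gives `α |E ∩ Q| ≤ τⁿ ∫_{3Q} |f| ≤ τⁿ 3ⁿ |Q| M f(x)`;
let `τ → 3`.
-/

open MeasureTheory Metric Set
open scoped ENNReal

/-- The uncentered Hardy–Littlewood maximal operator over cubes (= closed balls in the
sup metric on `ℝⁿ = Fin n → ℝ`), acting on `ℝ≥0∞`-valued functions. -/
noncomputable def maximal {n : ℕ} (f : (Fin n → ℝ) → ℝ≥0∞) (x : Fin n → ℝ) : ℝ≥0∞ :=
  ⨆ (c : Fin n → ℝ) (r : ℝ) (_ : 0 < r) (_ : x ∈ closedBall c r),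
    (volume (closedBall c r))⁻¹ * ∫⁻ y in closedBall c r, f y

/-- `Mχ_E`, the maximal function of the indicator of a set `E`. -/
noncomputable def maximalInd {n : ℕ} (E : Set (Fin n → ℝ)) (x : Fin n → ℝ) : ℝ≥0∞ :=
  maximal (E.indicator 1) x

open Filter Topology

theorem Metric.closedBall_subset_closedBall_three_mul {X : Type*} [PseudoMetricSpace X]
    {c c' : X} {r r' : ℝ} (hr : r ≤ r') (hne : (closedBall c r ∩ closedBall c' r').Nonempty) :
    closedBall c r ⊆ closedBall c' (3 * r') := by
  obtain ⟨y, hy, hy'⟩ := hne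
  rw [mem_closedBall] at hy hy'
  refine closedBall_subset_closedBall' ?_
  linarith [dist_triangle_left c c' y]

theorem ENNReal.le_ofReal_pow_mul_of_forall_lt {a b : ℝ≥0∞} {t : ℝ} (ht : 0 < t) (n : ℕ)
    (h : ∀ τ, t < τ → a ≤ ENNReal.ofReal (τ ^ n) * b) : a ≤ ENNReal.ofReal (t ^ n) * b := by
  have hlim : Tendsto (fun τ : ℝ => ENNReal.ofReal (τ ^ n) * b) (𝓝[>] t)
      (𝓝 (ENNReal.ofReal (t ^ n) * b)) := by
    refine ENNReal.Tendsto.mul_const ?_ (Or.inl (by positivity))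
    exact ((ENNReal.continuous_ofReal.comp (continuous_pow n)).tendsto t).mono_left
      nhdsWithin_le_nhds
  exact ge_of_tendsto hlim (eventually_nhdsWithin_of_forall h)

theorem MeasureTheory.setLIntegral_indicator_one_le {X : Type*} [MeasurableSpace X]
    (μ : Measure X) {s : Set X} (hs : MeasurableSet s) (t : Set X) :
    ∫⁻ y in s, t.indicator 1 y ∂μ ≤ μ (t ∩ s) := by
  calc ∫⁻ y in s, t.indicator 1 y ∂μ ≤ ∫⁻ _ in t, 1 ∂μ.restrict s := lintegral_indicator_le _ _
    _ = μ (t ∩ s) := by rw [setLIntegral_one, Measure.restrict_apply' hs]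

section Vitali

variable {E : Type*} [NormedAddCommGroup E] [NormedSpace ℝ E] [MeasurableSpace E] [BorelSpace E]
  [FiniteDimensional ℝ E] (μ : Measure E) [μ.IsAddHaarMeasure]

theorem MeasureTheory.Measure.addHaar_closedBall_mul_eq (x : E) {τ r : ℝ} (hτ : 0 ≤ τ)
    (hr : 0 ≤ r) :
    μ (closedBall x (τ * r)) = ENNReal.ofReal (τ ^ Module.finrank ℝ E) * μ (closedBall x r) := by
  rw [Measure.addHaar_closedBall_mul μ x hτ hr, ← Measure.addHaar_closedBall_center μ x]

theorem mul_measure_le_of_forall_mem_closedBall {S V : Set E} {F : E → ℝ≥0∞} {α : ℝ≥0∞}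
    {R τ : ℝ} (hτ : 3 < τ)
    (h : ∀ y ∈ S, ∃ c r, 0 < r ∧ r ≤ R ∧ y ∈ closedBall c r ∧ closedBall c r ⊆ V ∧
      α * μ (closedBall c r) ≤ ∫⁻ z in closedBall c r, F z ∂μ) :
    α * μ S ≤ ENNReal.ofReal (τ ^ Module.finrank ℝ E) * ∫⁻ z in V, F z ∂μ := by
  choose! c r hr hrR hyB hBV hB using h
  set K := ENNReal.ofReal (τ ^ Module.finrank ℝ E)
  obtain ⟨u, huS, hdisj, hcov⟩ :=
    Vitali.exists_disjoint_subfamily_covering_enlargement_closedBall S c r R hrR τ hτ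
  have hu : u.Countable := hdisj.countable_of_nonempty_interior fun b hb =>
    (nonempty_ball.2 (hr b (huS hb))).mono ball_subset_interior_closedBall
  have : Countable u := hu.to_subtype
  have hSU : S ⊆ ⋃ b ∈ u, closedBall (c b) (τ * r b) := fun y hy => by
    obtain ⟨b, hb, hsub⟩ := hcov y hy
    exact mem_biUnion hb (hsub (hyB y hy))
  calc α * μ S ≤ α * ∑' b : u, μ (closedBall (c b) (τ * r b)) :=
        mul_le_mul_right ((measure_mono hSU).trans (measure_biUnion_le μ hu _)) α
    _ = K * ∑' b : u, α * μ (closedBall (c b) (r b)) := by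
        rw [← ENNReal.tsum_mul_left, ← ENNReal.tsum_mul_left]
        congr 1 with b
        rw [Measure.addHaar_closedBall_mul_eq μ _ (by linarith) (hr b (huS b.2)).le]
        ring
    _ ≤ K * ∑' b : u, ∫⁻ z in closedBall (c b) (r b), F z ∂μ :=
        mul_le_mul_right (ENNReal.tsum_le_tsum fun b : ↥u => hB b (huS b.2)) _
    _ = K * ∫⁻ z in ⋃ b : ↥u, closedBall (c b) (r b), F z ∂μ := by
        rw [lintegral_iUnion (s := fun b : ↥u => closedBall (c b) (r b))
          (fun _ => measurableSet_closedBall)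
          fun i j hij => hdisj i.2 j.2 (Subtype.coe_injective.ne hij)]
    _ ≤ K * ∫⁻ z in V, F z ∂μ := by
        gcongr
        exact iUnion_subset fun b : ↥u => hBV b (huS b.2)

end Vitali

section Maximal

variable {n : ℕ} {F : (Fin n → ℝ) → ℝ≥0∞} {x c : Fin n → ℝ} {r : ℝ}

theorem setAverage_le_maximal (hr : 0 < r) (hx : x ∈ closedBall c r) :
    (volume (closedBall c r))⁻¹ * ∫⁻ y in closedBall c r, F y ≤ maximal F x :=
  le_iSup_of_le c <| le_iSup_of_le r <| le_iSup_of_le hr <| le_iSup_of_le hx le_rfl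

theorem lintegral_closedBall_le_mul_maximal (hr : 0 < r) (hx : x ∈ closedBall c r) :
    ∫⁻ y in closedBall c r, F y ≤ volume (closedBall c r) * maximal F x := by
  have h0 : volume (closedBall c r) ≠ 0 := (measure_closedBall_pos volume c hr).ne'
  have ht : volume (closedBall c r) ≠ ⊤ := measure_closedBall_lt_top.ne
  calc ∫⁻ y in closedBall c r, F y
      = volume (closedBall c r) *
          ((volume (closedBall c r))⁻¹ * ∫⁻ y in closedBall c r, F y) := by
        rw [← mul_assoc, ENNReal.mul_inv_cancel h0 ht, one_mul]
    _ ≤ volume (closedBall c r) * maximal F x := by gcongr; exact setAverage_le_maximal hr hx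

theorem volume_closedBall_three_mul (c : Fin n → ℝ) (hr : 0 ≤ r) :
    volume (closedBall c (3 * r)) = 3 ^ n * volume (closedBall c r) := by
  rw [Measure.addHaar_closedBall_mul_eq volume c (by norm_num) hr, Module.finrank_fin_fun,
    ENNReal.ofReal_pow (by norm_num), ENNReal.ofReal_ofNat]

theorem exists_closedBall_of_lt_maximal {α : ℝ≥0∞} {y : Fin n → ℝ} (h : α < maximal F y) :
    ∃ c r, 0 < r ∧ y ∈ closedBall c r ∧
      α * volume (closedBall c r) < ∫⁻ z in closedBall c r, F z := by
  simp only [maximal, lt_iSup_iff] at h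
  obtain ⟨c, r, hr, hy, h⟩ := h
  refine ⟨c, r, hr, hy, ?_⟩
  rwa [← ENNReal.div_eq_inv_mul, ENNReal.lt_div_iff_mul_lt
    (Or.inl (measure_closedBall_pos volume c hr).ne') (Or.inl measure_closedBall_lt_top.ne)] at h

theorem le_three_pow_mul_maximal {α : ℝ≥0∞} (hr : 0 < r) (hx : x ∈ closedBall c (3 * r))
    (h : α * volume (closedBall c r) ≤ ∫⁻ z in closedBall c r, F z) :
    α ≤ 3 ^ n * maximal F x := by
  refine (ENNReal.mul_le_mul_iff_left (measure_closedBall_pos volume c hr).ne'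
    measure_closedBall_lt_top.ne).1 ?_
  calc α * volume (closedBall c r) ≤ ∫⁻ z in closedBall c r, F z := h
    _ ≤ ∫⁻ z in closedBall c (3 * r), F z :=
        lintegral_mono_set (closedBall_subset_closedBall (by linarith))
    _ ≤ volume (closedBall c (3 * r)) * maximal F x :=
        lintegral_closedBall_le_mul_maximal (by linarith) hx
    _ = 3 ^ n * maximal F x * volume (closedBall c r) := by
        rw [volume_closedBall_three_mul c hr.le]; ring

theorem mul_volume_inter_le_of_three_lt {α : ℝ≥0∞} {τ : ℝ} (hτ : 3 < τ) (hr : 0 < r)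
    (hx : x ∈ closedBall c r) :
    α * volume ({y | α < maximal F y} ∩ closedBall c r) ≤
      ENNReal.ofReal (τ ^ n) * (3 ^ n * volume (closedBall c r) * maximal F x) := by
  by_cases hbig : ∃ c' r', r ≤ r' ∧ 0 < r' ∧ (closedBall c r ∩ closedBall c' r').Nonempty ∧
      α * volume (closedBall c' r') ≤ ∫⁻ z in closedBall c' r', F z
  · obtain ⟨c', r', hrr', hr', hne, h⟩ := hbig
    have hα : α ≤ 3 ^ n * maximal F x := le_three_pow_mul_maximal hr'
      (closedBall_subset_closedBall_three_mul hrr' hne hx) h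
    have hτn : 1 ≤ ENNReal.ofReal (τ ^ n) := ENNReal.one_le_ofReal.2 (one_le_pow₀ (by linarith))
    calc α * volume ({y | α < maximal F y} ∩ closedBall c r)
        ≤ 3 ^ n * maximal F x * volume (closedBall c r) := by gcongr; exact inter_subset_right
      _ ≤ ENNReal.ofReal (τ ^ n) * (3 ^ n * volume (closedBall c r) * maximal F x) := by
        rw [mul_right_comm]
        exact le_mul_of_one_le_left' hτn
  · push Not at hbig
    have hwit : ∀ y ∈ {y | α < maximal F y} ∩ closedBall c r, ∃ c' r', 0 < r' ∧ r' ≤ r ∧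
        y ∈ closedBall c' r' ∧ closedBall c' r' ⊆ closedBall c (3 * r) ∧
        α * volume (closedBall c' r') ≤ ∫⁻ z in closedBall c' r', F z := by
      rintro y ⟨hy, hyQ⟩
      obtain ⟨c', r', hr', hyB, h⟩ := exists_closedBall_of_lt_maximal hy
      have hsmall : r' ≤ r := not_lt.1 fun hlt =>
        (hbig c' r' hlt.le hr' ⟨y, hyQ, hyB⟩).not_ge h.le
      exact ⟨c', r', hr', hsmall, hyB,
        closedBall_subset_closedBall_three_mul hsmall ⟨y, hyB, hyQ⟩, h.le⟩
    calc α * volume ({y | α < maximal F y} ∩ closedBall c r)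
        ≤ ENNReal.ofReal (τ ^ n) * ∫⁻ z in closedBall c (3 * r), F z := by
          simpa only [Module.finrank_fin_fun] using
            mul_measure_le_of_forall_mem_closedBall volume hτ hwit
      _ ≤ ENNReal.ofReal (τ ^ n) * (3 ^ n * volume (closedBall c r) * maximal F x) := by
          rw [← volume_closedBall_three_mul c hr.le]
          gcongr
          exact lintegral_closedBall_le_mul_maximal (by linarith)
            (closedBall_subset_closedBall (by linarith) hx)

theorem volume_inter_le_nine_pow_div {α : ℝ≥0∞} (hα : α ≠ 0) (hr : 0 < r)
    (hx : x ∈ closedBall c r) :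
    volume ({y | α < maximal F y} ∩ closedBall c r) ≤
      9 ^ n / α * maximal F x * volume (closedBall c r) := by
  rcases eq_or_ne α ⊤ with rfl | hαtop
  · simp
  have h : α * volume ({y | α < maximal F y} ∩ closedBall c r) ≤
      9 ^ n * maximal F x * volume (closedBall c r) := by
    refine (ENNReal.le_ofReal_pow_mul_of_forall_lt (by norm_num) n fun τ hτ =>
      mul_volume_inter_le_of_three_lt hτ hr hx).trans_eq ?_
    rw [ENNReal.ofReal_pow (by norm_num), ENNReal.ofReal_ofNat,
      show (9 : ℝ≥0∞) = 3 * 3 by norm_num, mul_pow]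
    ring
  rw [← ENNReal.mul_div_right_comm, ← ENNReal.mul_div_right_comm,
    ENNReal.le_div_iff_mul_le (Or.inl hα) (Or.inl hαtop), mul_comm]
  exact h

end Maximal

theorem stmt0_general {n : ℕ} (f : (Fin n → ℝ) → ℝ)
    (α : ℝ≥0∞) (hα : 0 < α) (x : Fin n → ℝ) :
    maximalInd {y | α < maximal (fun y => (‖f y‖₊ : ℝ≥0∞)) y} x ≤
      (9 ^ n / α) * maximal (fun y => (‖f y‖₊ : ℝ≥0∞)) x := by
  set F : (Fin n → ℝ) → ℝ≥0∞ := fun y => ‖f y‖₊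
  refine iSup₂_le fun c r => iSup₂_le fun hr hx => ?_
  have hQ : volume (closedBall c r) ≠ 0 := (measure_closedBall_pos volume c hr).ne'
  calc (volume (closedBall c r))⁻¹ *
        ∫⁻ y in closedBall c r, {y | α < maximal F y}.indicator 1 y
      ≤ (volume (closedBall c r))⁻¹ * volume ({y | α < maximal F y} ∩ closedBall c r) := by
        gcongr
        exact setLIntegral_indicator_one_le volume measurableSet_closedBall _
    _ ≤ (volume (closedBall c r))⁻¹ * (9 ^ n / α * maximal F x * volume (closedBall c r)) := by
        gcongr
        exact volume_inter_le_nine_pow_div hα.ne' hr hx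
    _ = 9 ^ n / α * maximal F x := by
        rw [mul_comm, mul_assoc, ENNReal.mul_inv_cancel hQ measure_closedBall_lt_top.ne, mul_one]

/-- For every locally integrable `f`, `α > 0` and `x`,
`M(χ_{{Mf > α}})(x) ≤ (9^n / α) · Mf(x)`. -/
theorem stmt0 {n : ℕ} (f : (Fin n → ℝ) → ℝ) (hf : LocallyIntegrable f volume)
    (α : ℝ≥0∞) (hα : 0 < α) (x : Fin n → ℝ) :
    maximalInd {y | α < maximal (fun y => (‖f y‖₊ : ℝ≥0∞)) y} x ≤
      (9 ^ n / α) * maximal (fun y => (‖f y‖₊ : ℝ≥0∞)) x :=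
  stmt0_general f α hα x
end

section
/- Let Q be a cube in ℝⁿ. Then for every y ∈ Q and every cube Q' containing y, either Q' ⊆ 3Q or Q ⊆ 3Q'. Consequently, for every y ∈ Q, Mf(y) ≤ max( M(f·χ_{3Q})(y), 3^n · inf_{z∈Q} Mf(z) ). -/
open MeasureTheory Metric Set
open scoped ENNReal

lemma avg_le_maximal {n : ℕ} (f : (Fin n → ℝ) → ℝ≥0∞) {x c : Fin n → ℝ} {r : ℝ}
    (hr : 0 < r) (hx : x ∈ closedBall c r) :
    (volume (closedBall c r))⁻¹ * ∫⁻ y in closedBall c r, f y ≤ maximal f x :=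
  le_iSup_of_le c (le_iSup_of_le r (le_iSup_of_le hr (le_iSup_of_le hx le_rfl)))

lemma vol_triple {n : ℕ} (c : Fin n → ℝ) {r : ℝ} (hr : 0 < r) :
    volume (closedBall c (3 * r)) = 3 ^ n * volume (closedBall c r) := by
  rw [Real.volume_pi_closedBall c hr.le,
    Real.volume_pi_closedBall c (by positivity : (0:ℝ) ≤ 3 * r)]
  rw [show (2 * (3 * r)) = 3 * (2 * r) by ring, mul_pow, ENNReal.ofReal_mul (by positivity),
    Fintype.card_fin]
  congr 1
  rw [ENNReal.ofReal_pow (by norm_num)]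
  norm_num

/-- Let `Q = closedBall c r` be a cube. (a) For every `y ∈ Q` and every cube `Q'`
containing `y`, either `Q' ⊆ 3Q` or `Q ⊆ 3Q'`. (b) Consequently, for every `y ∈ Q`,
`Mf(y) ≤ max( M(f·χ_{3Q})(y), 3^n · inf_{z∈Q} Mf(z) )`. -/
theorem stmt1 {n : ℕ} (f : (Fin n → ℝ) → ℝ) (hf : LocallyIntegrable f volume)
    (c : Fin n → ℝ) (r : ℝ) (hr : 0 < r) :
    (∀ y ∈ closedBall c r, ∀ (c' : Fin n → ℝ) (r' : ℝ), 0 < r' → y ∈ closedBall c' r' →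
      closedBall c' r' ⊆ closedBall c (3 * r) ∨ closedBall c r ⊆ closedBall c' (3 * r')) ∧
    (∀ y ∈ closedBall c r,
      maximal (fun z => (‖f z‖₊ : ℝ≥0∞)) y ≤
        max (maximal ((closedBall c (3 * r)).indicator fun z => (‖f z‖₊ : ℝ≥0∞)) y)
          (3 ^ n * ⨅ z ∈ closedBall c r, maximal (fun z => (‖f z‖₊ : ℝ≥0∞)) z)) := by
  set g : (Fin n → ℝ) → ℝ≥0∞ := fun z => (‖f z‖₊ : ℝ≥0∞) with hg
  have key : ∀ y ∈ closedBall c r, ∀ (c' : Fin n → ℝ) (r' : ℝ), 0 < r' →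
      y ∈ closedBall c' r' →
      closedBall c' r' ⊆ closedBall c (3 * r) ∨ closedBall c r ⊆ closedBall c' (3 * r') := by
    intro y hy c' r' hr' hy'
    rw [mem_closedBall] at hy hy'
    rcases le_or_gt r' r with h | h
    · left
      intro z hz
      rw [mem_closedBall] at hz ⊢
      have := dist_triangle4 z c' y c
      have h1 : dist c' y = dist y c' := dist_comm _ _
      linarith [dist_triangle4 z c' y c]
    · right
      intro z hz
      rw [mem_closedBall] at hz ⊢
      have h1 : dist c y = dist y c := dist_comm _ _
      linarith [dist_triangle4 z c y c']
  refine ⟨key, ?_⟩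
  intro y hy
  rw [maximal]
  refine iSup_le fun c' => iSup_le fun r' => iSup_le fun hr' => iSup_le fun hy' => ?_
  rcases key y hy c' r' hr' hy' with hsub | hsub
  · refine le_max_of_le_left ?_
    have heq : ∫⁻ z in closedBall c' r', g z
        = ∫⁻ z in closedBall c' r', (closedBall c (3 * r)).indicator g z := by
      refine setLIntegral_congr_fun measurableSet_closedBall ?_
      exact fun z hz => (indicator_of_mem (hsub hz) g).symm
    rw [heq]
    exact avg_le_maximal _ hr' hy'
  · refine le_max_of_le_right ?_
    have hvol : (volume (closedBall c' r'))⁻¹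
        = 3 ^ n * (volume (closedBall c' (3 * r')))⁻¹ := by
      rw [vol_triple c' hr', ENNReal.mul_inv (by simp) (by simp), ← mul_assoc,
        ENNReal.mul_inv_cancel (by positivity) (by simp), one_mul]
    have hmono : (∫⁻ z in closedBall c' r', g z)
        ≤ ∫⁻ z in closedBall c' (3 * r'), g z :=
      lintegral_mono_set (closedBall_subset_closedBall (by linarith))
    have step : (volume (closedBall c' r'))⁻¹ * ∫⁻ z in closedBall c' r', g z
        ≤ 3 ^ n * ((volume (closedBall c' (3 * r')))⁻¹
            * ∫⁻ z in closedBall c' (3 * r'), g z) := by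
      rw [hvol, mul_assoc]
      exact mul_le_mul_right (mul_le_mul_right hmono _) _
    refine step.trans (mul_le_mul_right ?_ _)
    refine le_iInf₂ fun z hz => ?_
    exact avg_le_maximal g (by positivity) (hsub hz)
end

section
/- For every measurable function f on ℝⁿ, every cube Q, and every λ ∈ (0,1), the oscillation-type quantity ω̃_λ(f;Q) = inf{ ω(f;E) : E ⊆ Q measurable, |E| ≥ (1−λ)|Q| } satisfies ω̃_λ(f;Q) ≤ 2·ω_λ(f;Q), where ω_λ(f;Q) = inf_{c∈ℝ} ((f−c)χ_Q)^*(λ|Q|). -/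
/-!
If `|{x ∈ Q : |f x - c| > α}| ≤ λ|Q|`, then `E = Q ∩ {|f - c| ≤ α}` is an admissible set for
`ω̃_λ(f;Q)`, and `f` takes its values in `[c - α, c + α]` on `E`, so `ω(f;E) ≤ 2α`. Taking the
infimum over such `α` gives `ω̃_λ(f;Q) ≤ 2((f - c)χ_Q)^*(λ|Q|)`, and then the infimum over `c`.
-/

open MeasureTheory Metric Set
open scoped ENNReal

/-- The non-increasing rearrangement `g^*(t) = inf{α > 0 : |{|g| > α}| ≤ t}`. -/
noncomputable def rearr {n : ℕ} (g : (Fin n → ℝ) → ℝ) (t : ℝ≥0∞) : ℝ :=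
  sInf {α : ℝ | 0 < α ∧ volume {x | α < |g x|} ≤ t}

/-- `ω(f;E) = ess sup_E f − ess inf_E f`. -/
noncomputable def osc {n : ℕ} (f : (Fin n → ℝ) → ℝ) (E : Set (Fin n → ℝ)) : ℝ :=
  essSup f (volume.restrict E) - essInf f (volume.restrict E)

/-- `ω_λ(f;Q) = inf_c ((f−c)χ_Q)^*(λ|Q|)`. -/
noncomputable def oscLam {n : ℕ} (f : (Fin n → ℝ) → ℝ) (Q : Set (Fin n → ℝ)) (l : ℝ) : ℝ :=
  ⨅ c : ℝ, rearr (Q.indicator fun x => f x - c) (ENNReal.ofReal l * volume Q)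

/-- `ω̃_λ(f;Q) = inf{ω(f;E) : E ⊆ Q measurable, |E| ≥ (1−λ)|Q|}`. -/
noncomputable def oscLamTilde {n : ℕ} (f : (Fin n → ℝ) → ℝ) (Q : Set (Fin n → ℝ)) (l : ℝ) : ℝ :=
  sInf {a : ℝ | ∃ E : Set (Fin n → ℝ), MeasurableSet E ∧ E ⊆ Q ∧
    ENNReal.ofReal (1 - l) * volume Q ≤ volume E ∧ a = osc f E}

open Filter Topology

theorem Real.sInf_le_of_le_of_nonneg {s : Set ℝ} {a b : ℝ} (hb : b ∈ s) (hba : b ≤ a)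
    (ha : 0 ≤ a) : sInf s ≤ a := by
  by_cases hs : BddBelow s
  · exact csInf_le_of_le hs hb hba
  · rwa [Real.sInf_of_not_bddBelow hs]

section Measure

variable {α : Type*} [MeasurableSpace α] {μ : Measure α}

theorem tendsto_measure_lt_abs_atTop {g : α → ℝ} (hg : Measurable g)
    (hsupp : μ (Function.support g) ≠ ∞) :
    Tendsto (fun r : ℝ => μ {x | r < |g x|}) atTop (𝓝 0) := by
  have hanti : Antitone fun r : ℝ => {x | r < |g x|} :=
    fun r s hrs x hx => lt_of_le_of_lt hrs hx
  have hempty : ⋂ r : ℝ, {x | r < |g x|} = ∅ :=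
    eq_empty_of_forall_notMem fun x hx => lt_irrefl |g x| (mem_iInter.1 hx |g x|)
  have hfin : ∃ r : ℝ, μ {x | r < |g x|} ≠ ∞ :=
    ⟨0, ne_top_of_le_ne_top hsupp (measure_mono fun x hx => abs_pos.1 hx)⟩
  simpa [Function.comp_def, hempty] using tendsto_measure_iInter_atTop
    (fun r => (measurableSet_lt measurable_const hg.abs).nullMeasurableSet) hanti hfin

theorem exists_pos_measure_lt_abs_le {g : α → ℝ} (hg : Measurable g)
    (hsupp : μ (Function.support g) ≠ ∞) {t : ℝ≥0∞} (ht : 0 < t) :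
    ∃ a : ℝ, 0 < a ∧ μ {x | a < |g x|} ≤ t :=
  (((tendsto_measure_lt_abs_atTop hg hsupp).eventually_lt_const ht).and
    (eventually_gt_atTop 0)).exists.imp fun _ h => ⟨h.2, h.1.le⟩

theorem essSup_sub_essInf_le_two_mul (hμ : μ ≠ 0) {f : α → ℝ} {c a : ℝ}
    (h : ∀ᵐ x ∂μ, |f x - c| ≤ a) : essSup f μ - essInf f μ ≤ 2 * a := by
  have : (ae μ).NeBot := ae_neBot.2 hμ
  have hub : ∀ᵐ x ∂μ, f x ≤ c + a := h.mono fun x hx => by linarith [(abs_le.1 hx).2]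
  have hlb : ∀ᵐ x ∂μ, c - a ≤ f x := h.mono fun x hx => by linarith [(abs_le.1 hx).1]
  have hsup := essSup_le_of_ae_le (c + a) hub (isCoboundedUnder_le_of_eventually_le _ hlb)
  have hinf := le_essInf_of_ae_le (c - a) hlb (isCoboundedUnder_ge_of_eventually_le _ hub)
  linarith

theorem ofReal_one_sub_mul_le_measure {s t : Set α} {l : ℝ} (hts : t ⊆ s)
    (ht : MeasurableSet t) (hs : μ s ≠ ∞) (hl : 0 ≤ l)
    (hdiff : μ (s \ t) ≤ ENNReal.ofReal l * μ s) :
    ENNReal.ofReal (1 - l) * μ s ≤ μ t := by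
  have hμt : μ t = μ s - μ (s \ t) := by
    rw [measure_sdiff hts ht.nullMeasurableSet (ne_top_of_le_ne_top hs (measure_mono hts)),
      ENNReal.sub_sub_cancel hs (measure_mono hts)]
  calc ENNReal.ofReal (1 - l) * μ s = μ s - ENNReal.ofReal l * μ s := by
        rw [ENNReal.ofReal_sub _ hl, ENNReal.ofReal_one, ENNReal.sub_mul fun _ _ => hs, one_mul]
    _ ≤ μ t := hμt ▸ tsub_le_tsub_left hdiff _

end Measure

section Oscillation

variable {n : ℕ} {f : (Fin n → ℝ) → ℝ} {Q : Set (Fin n → ℝ)} {l : ℝ}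

theorem oscLamTilde_le_two_mul_of_measure_le {c a : ℝ} (hf : Measurable f) (hQ : MeasurableSet Q)
    (hQ0 : volume Q ≠ 0) (hQtop : volume Q ≠ ∞) (hl0 : 0 ≤ l) (hl1 : l < 1) (ha : 0 ≤ a)
    (hlevel : volume {x | a < |Q.indicator (fun x => f x - c) x|} ≤ ENNReal.ofReal l * volume Q) :
    oscLamTilde f Q l ≤ 2 * a := by
  set E := Q ∩ {x | |f x - c| ≤ a}
  have hE : MeasurableSet E :=
    hQ.inter (measurableSet_le (hf.sub measurable_const).abs measurable_const)
  have hdiff : Q \ E ⊆ {x | a < |Q.indicator (fun x => f x - c) x|} := fun x ⟨hxQ, hxE⟩ => by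
    change a < |Q.indicator _ x|
    rw [indicator_of_mem hxQ]
    exact not_le.1 fun h => hxE ⟨hxQ, h⟩
  have hEvol := ofReal_one_sub_mul_le_measure inter_subset_left hE hQtop hl0
    ((measure_mono hdiff).trans hlevel)
  have hE0 : volume.restrict E ≠ 0 := mt Measure.restrict_eq_zero.1
    (lt_of_lt_of_le (ENNReal.mul_pos (by simpa using hl1) hQ0) hEvol).ne'
  have hosc : osc f E ≤ 2 * a := essSup_sub_essInf_le_two_mul hE0
    ((ae_restrict_iff' hE).2 (Eventually.of_forall fun x hx => hx.2))
  -- `osc` is junk where `f` is essentially unbounded, so the oscillations need not be bounded below.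
  exact Real.sInf_le_of_le_of_nonneg ⟨E, hE, inter_subset_left, hEvol, rfl⟩ hosc (by linarith)

theorem oscLamTilde_le_two_mul_rearr (hf : Measurable f) (hQ : MeasurableSet Q)
    (hQ0 : volume Q ≠ 0) (hQtop : volume Q ≠ ∞) (hl0 : 0 < l) (hl1 : l < 1) (c : ℝ) :
    oscLamTilde f Q l ≤ 2 * rearr (Q.indicator fun x => f x - c) (ENNReal.ofReal l * volume Q) := by
  have hlevels := exists_pos_measure_lt_abs_le (g := Q.indicator fun x => f x - c)
    ((hf.sub measurable_const).indicator hQ)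
    (ne_top_of_le_ne_top hQtop (measure_mono support_indicator_subset))
    (ENNReal.mul_pos (ENNReal.ofReal_pos.2 hl0).ne' hQ0)
  rw [← div_le_iff₀' two_pos]
  exact le_csInf hlevels fun a ⟨ha, hlevel⟩ => by
    rw [div_le_iff₀' two_pos]
    exact oscLamTilde_le_two_mul_of_measure_le hf hQ hQ0 hQtop hl0.le hl1 ha.le hlevel

end Oscillation

/-- For every measurable `f`, cube `Q` and `λ ∈ (0,1)`: `ω̃_λ(f;Q) ≤ 2·ω_λ(f;Q)`. -/
theorem stmt2 {n : ℕ} (f : (Fin n → ℝ) → ℝ) (hf : Measurable f)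
    (c : Fin n → ℝ) (r : ℝ) (hr : 0 < r) (l : ℝ) (hl0 : 0 < l) (hl1 : l < 1) :
    oscLamTilde f (closedBall c r) l ≤ 2 * oscLam f (closedBall c r) l := by
  rw [oscLam, ← div_le_iff₀' two_pos]
  exact le_ciInf fun c' => by
    rw [div_le_iff₀' two_pos]
    exact oscLamTilde_le_two_mul_rearr hf measurableSet_closedBall
      (measure_closedBall_pos volume c hr).ne' measure_closedBall_lt_top.ne hl0 hl1 c'
end

section
/- Let 0 < τ < 1, let E ⊆ ℝⁿ be measurable, and let Q be a cube with |Q ∩ E|/|Q| ≤ τ. Then |Q ∩ E| ≤ 2^n τ · |Q ∩ {Mχ_E > τ}|, where M is the dyadic-style Calderón–Zygmund maximal operator over subcubes. Consequently, for every x with Mχ_E(x) ≤ τ one has Mχ_E(x) ≤ 2^n τ · Mχ_{{Mχ_E > τ}}(x). -/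
/-!
Calderón–Zygmund stopping time. Split a cube `Q` of density at most `τ` into its `2ⁿ` dyadic
children. A child of density `> τ` lies entirely in `{Mχ_E > τ}`, and as its parent has density
`≤ τ`, `|child ∩ E| ≤ τ |Q| = 2ⁿ τ |child|`. Children of density `≤ τ` are split again. Since
children overlap only in hyperplanes, after `k` generations
`|Q ∩ E| ≤ 2ⁿ τ |Q ∩ {Mχ_E > τ}| + |R_k ∩ E|`, where `R_k` is the union of the generation-`k`
cubes reached through low-density cubes only. A point of `⋂ R_k` lies in low-density cubes of
side tending to `0`, so by the Lebesgue density theorem `⋂ R_k ∩ E` is null and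
`|R_k ∩ E| → 0`. The pointwise bound follows by applying the cube bound to every cube
containing `x`.
-/

open MeasureTheory Metric Set
open scoped ENNReal

open Filter Topology

section DyadicChildren

variable {ι : Type*} [Fintype ι]

noncomputable def childCenter (c : ι → ℝ) (r : ℝ) (b : ι → Bool) : ι → ℝ :=
  fun i => c i + if b i then r / 2 else -(r / 2)

lemma mem_closedBall_pi_iff {c x : ι → ℝ} {r : ℝ} (hr : 0 ≤ r) :
    x ∈ closedBall c r ↔ ∀ i, x i ∈ Icc (c i - r) (c i + r) := by
  simp only [closedBall_pi c hr, mem_univ_pi, Real.closedBall_eq_Icc]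

lemma mem_closedBall_childCenter_iff {c x : ι → ℝ} {r : ℝ} (hr : 0 ≤ r) (b : ι → Bool) :
    x ∈ closedBall (childCenter c r b) (r / 2) ↔
      ∀ i, x i ∈ if b i then Icc (c i) (c i + r) else Icc (c i - r) (c i) := by
  rw [mem_closedBall_pi_iff (by positivity)]
  refine forall_congr' fun i => ?_
  simp only [childCenter]
  split_ifs <;> simp only [mem_Icc] <;> constructor <;> rintro ⟨h₁, h₂⟩ <;> constructor <;>
    linarith

lemma closedBall_childCenter_subset {c : ι → ℝ} {r : ℝ} (hr : 0 ≤ r) (b : ι → Bool) :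
    closedBall (childCenter c r b) (r / 2) ⊆ closedBall c r := by
  intro x hx
  rw [mem_closedBall_childCenter_iff hr] at hx
  rw [mem_closedBall_pi_iff hr]
  intro i
  have := hx i
  split_ifs at this <;> exact Icc_subset_Icc (by linarith) (by linarith) this

lemma iUnion_closedBall_childCenter {c : ι → ℝ} {r : ℝ} (hr : 0 ≤ r) :
    ⋃ b, closedBall (childCenter c r b) (r / 2) = closedBall c r := by
  refine (iUnion_subset (closedBall_childCenter_subset hr)).antisymm fun x hx => ?_
  rw [mem_closedBall_pi_iff hr] at hx
  refine mem_iUnion.2 ⟨fun i => decide (c i ≤ x i),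
    (mem_closedBall_childCenter_iff hr _).2 fun i => ?_⟩
  obtain ⟨h₁, h₂⟩ := hx i
  by_cases h : c i ≤ x i
  · simp only [h, decide_true, if_true]
    exact ⟨h, h₂⟩
  · simp only [h, decide_false, Bool.false_eq_true, if_false]
    exact ⟨h₁, (not_le.1 h).le⟩

lemma pairwise_aedisjoint_closedBall_childCenter {c : ι → ℝ} {r : ℝ} (hr : 0 ≤ r) :
    Pairwise (Function.onFun (AEDisjoint volume)
      fun b => closedBall (childCenter c r b) (r / 2)) := by
  intro b b' hbb'
  obtain ⟨i, hi⟩ := Function.ne_iff.1 hbb'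
  refine measure_mono_null (t := {x | x i = c i}) (fun x ⟨hx, hx'⟩ => ?_)
    (by rw [volume_pi]; exact Measure.pi_hyperplane (fun _ : ι => (volume : Measure ℝ)) i (c i))
  have h := (mem_closedBall_childCenter_iff hr b).1 hx i
  have h' := (mem_closedBall_childCenter_iff hr b').1 hx' i
  show x i = c i
  cases hb : b i <;> cases hb' : b' i <;>
    simp only [hb, hb', ne_eq, not_true_eq_false, Bool.false_eq_true, if_true, if_false,
      mem_Icc] at h h' hi <;> linarith [h.1, h.2, h'.1, h'.2]

lemma volume_closedBall_eq_two_pow_mul {c : ι → ℝ} {r : ℝ} (hr : 0 ≤ r) (b : ι → Bool) :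
    volume (closedBall c r) =
      2 ^ Fintype.card ι * volume (closedBall (childCenter c r b) (r / 2)) := by
  rw [Real.volume_pi_closedBall _ hr, Real.volume_pi_closedBall _ (by positivity),
    mul_div_cancel₀ r two_ne_zero, mul_pow, ENNReal.ofReal_mul (by positivity),
    ENNReal.ofReal_pow zero_le_two, ENNReal.ofReal_ofNat]

lemma volume_iUnion_eq_tsum_of_subset_childCenter {c : ι → ℝ} {r : ℝ} (hr : 0 ≤ r)
    {S : (ι → Bool) → Set (ι → ℝ)} (hS : ∀ b, S b ⊆ closedBall (childCenter c r b) (r / 2))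
    (hm : ∀ b, NullMeasurableSet (S b)) :
    volume (⋃ b, S b) = ∑' b, volume (S b) :=
  measure_iUnion₀ (fun _ _ h => (pairwise_aedisjoint_closedBall_childCenter hr h).mono
    (hS _) (hS _)) hm

lemma volume_closedBall_inter_eq_tsum {c : ι → ℝ} {r : ℝ} (hr : 0 ≤ r) {A : Set (ι → ℝ)}
    (hA : NullMeasurableSet A) :
    volume (closedBall c r ∩ A) =
      ∑' b, volume (closedBall (childCenter c r b) (r / 2) ∩ A) := by
  rw [← volume_iUnion_eq_tsum_of_subset_childCenter hr (fun _ => inter_subset_left)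
    (fun _ => measurableSet_closedBall.nullMeasurableSet.inter hA), ← iUnion_inter,
    iUnion_closedBall_childCenter hr]

end DyadicChildren

section CalderonZygmund
variable {ι : Type*} [Fintype ι] (E : Set (ι → ℝ)) (t : ℝ≥0∞)

def LowDensity (c : ι → ℝ) (r : ℝ) : Prop :=
  volume (closedBall c r ∩ E) ≤ t * volume (closedBall c r)

/-- The set `R_k` of the stopping time started at `closedBall c r`. -/
noncomputable def czRemainder : ℕ → (ι → ℝ) → ℝ → Set (ι → ℝ)
  | 0, c, r => closedBall c r
  | k + 1, c, r => ⋃ (b) (_ : LowDensity E t (childCenter c r b) (r / 2)),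
      czRemainder k (childCenter c r b) (r / 2)

variable {E t} {F : Set (ι → ℝ)}

lemma czRemainder_subset (k : ℕ) {c : ι → ℝ} {r : ℝ} (hr : 0 ≤ r) :
    czRemainder E t k c r ⊆ closedBall c r := by
  induction k generalizing c r with
  | zero => exact subset_rfl
  | succ k ih =>
    exact iUnion₂_subset fun b _ =>
      (ih (by positivity)).trans (closedBall_childCenter_subset hr b)

lemma measurableSet_czRemainder (k : ℕ) (c : ι → ℝ) (r : ℝ) :
    MeasurableSet (czRemainder E t k c r) := by
  induction k generalizing c r with
  | zero => exact measurableSet_closedBall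
  | succ k ih => exact .iUnion fun _ => .iUnion fun _ => ih _ _

lemma czRemainder_succ_subset (k : ℕ) {c : ι → ℝ} {r : ℝ} (hr : 0 ≤ r) :
    czRemainder E t (k + 1) c r ⊆ czRemainder E t k c r := by
  induction k generalizing c r with
  | zero => exact czRemainder_subset 1 hr
  | succ k ih => exact iUnion₂_mono fun _ _ => ih (by positivity)

lemma exists_lowDensity_of_mem_czRemainder {k : ℕ} {c x : ι → ℝ} {r : ℝ}
    (hQ : LowDensity E t c r) (hx : x ∈ czRemainder E t k c r) :
    ∃ c', x ∈ closedBall c' (r / 2 ^ k) ∧ LowDensity E t c' (r / 2 ^ k) := by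
  induction k generalizing c r with
  | zero => exact ⟨c, by simpa [czRemainder] using hx, by simpa using hQ⟩
  | succ k ih =>
    obtain ⟨b, hb, hx⟩ := mem_iUnion₂.1 hx
    rw [pow_succ', ← div_div]
    exact ih hb hx

lemma lowDensity_iff {c : ι → ℝ} {r : ℝ} (hr : 0 < r) :
    LowDensity E t c r ↔ (volume (closedBall c r))⁻¹ * volume (closedBall c r ∩ E) ≤ t := by
  rw [LowDensity, mul_comm, ENNReal.inv_mul_le_iff (measure_closedBall_pos volume c hr).ne'
    measure_closedBall_lt_top.ne]

lemma volume_inter_le_add_czRemainder (hE : NullMeasurableSet E) (hF : NullMeasurableSet F)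
    (hbad : ∀ c r, 0 < r → ¬LowDensity E t c r → closedBall c r ⊆ F) (k : ℕ) {c : ι → ℝ}
    {r : ℝ} (hr : 0 < r) (hQ : LowDensity E t c r) :
    volume (closedBall c r ∩ E) ≤ 2 ^ Fintype.card ι * t * volume (closedBall c r ∩ F) +
      volume (czRemainder E t k c r ∩ E) := by
  induction k generalizing c r with
  | zero => exact le_add_self
  | succ k ih =>
    set Q' := fun b => closedBall (childCenter c r b) (r / 2)
    set R' := fun b => ⋃ (_ : LowDensity E t (childCenter c r b) (r / 2)),
      czRemainder E t k (childCenter c r b) (r / 2)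
    have hchild : ∀ b, volume (Q' b ∩ E) ≤
        2 ^ Fintype.card ι * t * volume (Q' b ∩ F) + volume (R' b ∩ E) := by
      intro b
      by_cases hb : LowDensity E t (childCenter c r b) (r / 2)
      · simpa only [R', hb, iUnion_true] using ih (by positivity) hb
      -- a high-density child lies in `F`, while its parent has low density
      refine le_add_right ?_
      rw [inter_eq_left.2 (hbad _ _ (by positivity) hb)]
      calc volume (Q' b ∩ E) ≤ volume (closedBall c r ∩ E) :=
            measure_mono (inter_subset_inter_left _ (closedBall_childCenter_subset hr.le b))
        _ ≤ t * volume (closedBall c r) := hQ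
        _ = 2 ^ Fintype.card ι * t * volume (Q' b) := by
            rw [volume_closedBall_eq_two_pow_mul hr.le b]; ring
    have hR' : ∀ b, R' b ∩ E ⊆ Q' b := fun b =>
      inter_subset_left.trans (iUnion_subset fun _ => czRemainder_subset _ (by positivity))
    have hR'm : ∀ b, NullMeasurableSet (R' b ∩ E) := fun b =>
      (MeasurableSet.iUnion fun _ => measurableSet_czRemainder _ _ _).nullMeasurableSet.inter hE
    calc volume (closedBall c r ∩ E) = ∑' b, volume (Q' b ∩ E) :=
          volume_closedBall_inter_eq_tsum hr.le hE
      _ ≤ ∑' b, (2 ^ Fintype.card ι * t * volume (Q' b ∩ F) + volume (R' b ∩ E)) :=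
          ENNReal.tsum_le_tsum hchild
      _ = 2 ^ Fintype.card ι * t * volume (closedBall c r ∩ F) +
            volume (czRemainder E t (k + 1) c r ∩ E) := by
          rw [ENNReal.tsum_add, ENNReal.tsum_mul_left, ← volume_closedBall_inter_eq_tsum hr.le hF,
            czRemainder, iUnion_inter,
            volume_iUnion_eq_tsum_of_subset_childCenter hr.le hR' hR'm]

lemma volume_iInter_czRemainder_inter_eq_zero (ht : t < 1) {c : ι → ℝ} {r : ℝ} (hr : 0 < r)
    (hQ : LowDensity E t c r) :
    volume ((⋂ k, czRemainder E t k c r) ∩ E) = 0 := by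
  rw [← Measure.restrict_apply (.iInter fun k => measurableSet_czRemainder k c r),
    measure_eq_zero_iff_ae_notMem]
  filter_upwards [IsUnifLocDoublingMeasure.ae_tendsto_measure_inter_div volume E 1]
    with x hx hxR
  choose w hxw hw using fun k =>
    exists_lowDensity_of_mem_czRemainder hQ (mem_iInter.1 hxR k)
  have hδ : Tendsto (fun k : ℕ => r / 2 ^ k) atTop (𝓝[>] 0) :=
    tendsto_nhdsWithin_iff.2 ⟨tendsto_const_nhds.div_atTop
      (tendsto_pow_atTop_atTop_of_one_lt one_lt_two),
      .of_forall fun k => mem_Ioi.2 (by positivity)⟩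
  have hdensity := hx w _ hδ (.of_forall fun k => by simpa only [one_mul] using hxw k)
  have : (1 : ℝ≥0∞) ≤ t := le_of_tendsto' hdensity fun k =>
    ENNReal.div_le_of_le_mul (by rw [inter_comm]; exact hw k)
  exact ht.not_ge this

lemma volume_inter_le_of_lowDensity (hE : NullMeasurableSet E) (hF : NullMeasurableSet F)
    (hbad : ∀ c r, 0 < r → ¬LowDensity E t c r → closedBall c r ⊆ F) (ht : t < 1)
    {c : ι → ℝ} {r : ℝ} (hr : 0 < r) (hQ : LowDensity E t c r) :
    volume (closedBall c r ∩ E) ≤ 2 ^ Fintype.card ι * t * volume (closedBall c r ∩ F) := by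
  have hlim : Tendsto (fun k => volume (czRemainder E t k c r ∩ E)) atTop (𝓝 0) := by
    rw [← volume_iInter_czRemainder_inter_eq_zero ht hr hQ, iInter_inter]
    refine tendsto_measure_iInter_atTop
      (fun k => (measurableSet_czRemainder k c r).nullMeasurableSet.inter hE)
      (antitone_nat_of_succ_le fun k => inter_subset_inter_left _
        (czRemainder_succ_subset k hr.le)) ⟨0, ?_⟩
    exact (measure_mono inter_subset_left).trans_lt measure_closedBall_lt_top |>.ne
  refine ge_of_tendsto (by simpa using hlim.const_add _) (.of_forall fun k => ?_)
  exact volume_inter_le_add_czRemainder hE hF hbad k hr hQ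

end CalderonZygmund

section MaximalFunction
variable {n : ℕ}

lemma le_maximal (f : (Fin n → ℝ) → ℝ≥0∞) {c x : Fin n → ℝ} {r : ℝ} (hr : 0 < r)
    (hx : x ∈ closedBall c r) :
    (volume (closedBall c r))⁻¹ * ∫⁻ y in closedBall c r, f y ≤ maximal f x :=
  le_iSup₂_of_le c r <| le_iSup₂_of_le hr hx le_rfl

lemma isOpen_lt_maximal (f : (Fin n → ℝ) → ℝ≥0∞) (s : ℝ≥0∞) :
    IsOpen {x | s < maximal f x} := by
  refine isOpen_iff_forall_mem_open.2 fun x hx => ?_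
  obtain ⟨c, r, hr, hxc, hs⟩ : ∃ c r, 0 < r ∧ x ∈ closedBall c r ∧
      s < (volume (closedBall c r))⁻¹ * ∫⁻ y in closedBall c r, f y := by
    simpa only [mem_ofPred_eq, maximal, lt_iSup_iff, exists_prop] using hx
  have hvol : Tendsto (fun ρ => volume (closedBall c ρ)) (𝓝[>] r)
      (𝓝 (volume (closedBall c r))) := by
    have hcont : Continuous fun ρ : ℝ => ENNReal.ofReal ((2 * ρ) ^ n) :=
      ENNReal.continuous_ofReal.comp (by fun_prop)
    rw [Real.volume_pi_closedBall c hr.le, Fintype.card_fin]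
    refine (hcont.tendsto r |>.mono_left nhdsWithin_le_nhds).congr' ?_
    filter_upwards [self_mem_nhdsWithin] with ρ hρ
    rw [Real.volume_pi_closedBall c (hr.trans hρ).le, Fintype.card_fin]
  -- a slightly larger concentric cube still has average above `s`
  have hlarger :
      ∀ᶠ ρ in 𝓝[>] r, s < (volume (closedBall c ρ))⁻¹ * ∫⁻ y in closedBall c r, f y :=
    (ENNReal.Tendsto.mul_const (tendsto_inv_iff.2 hvol)
      (Or.inl (ENNReal.inv_ne_zero.2 measure_closedBall_lt_top.ne))).eventually (lt_mem_nhds hs)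
  obtain ⟨ρ, hρ, hrρ⟩ := (hlarger.and self_mem_nhdsWithin).exists
  refine ⟨ball c ρ, fun y hy => ?_, isOpen_ball, (mem_closedBall.1 hxc).trans_lt hrρ⟩
  calc s < (volume (closedBall c ρ))⁻¹ * ∫⁻ y in closedBall c r, f y := hρ
    _ ≤ (volume (closedBall c ρ))⁻¹ * ∫⁻ y in closedBall c ρ, f y := by gcongr
    _ ≤ maximal f y := le_maximal f (hr.trans hrρ) (ball_subset_closedBall hy)

variable {E F : Set (Fin n → ℝ)}

lemma inv_mul_volume_inter_le_maximalInd (hE : MeasurableSet E) {c x : Fin n → ℝ} {r : ℝ}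
    (hr : 0 < r) (hx : x ∈ closedBall c r) :
    (volume (closedBall c r))⁻¹ * volume (closedBall c r ∩ E) ≤ maximalInd E x := by
  simpa only [maximalInd, lintegral_indicator_one hE, Measure.restrict_apply hE, inter_comm]
    using le_maximal (E.indicator 1) hr hx

lemma maximalInd_eq (hE : MeasurableSet E) (x : Fin n → ℝ) :
    maximalInd E x = ⨆ (c : Fin n → ℝ) (r : ℝ) (_ : 0 < r) (_ : x ∈ closedBall c r),
      (volume (closedBall c r))⁻¹ * volume (closedBall c r ∩ E) := by
  simp only [maximalInd, maximal, lintegral_indicator_one hE, Measure.restrict_apply hE,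
    inter_comm]

lemma closedBall_subset_of_not_lowDensity (hE : MeasurableSet E) {t : ℝ≥0∞} {c : Fin n → ℝ}
    {r : ℝ} (hr : 0 < r) (hQ : ¬LowDensity E t c r) :
    closedBall c r ⊆ {x | t < maximalInd E x} := fun _ hx =>
  (not_le.1 ((lowDensity_iff hr).not.1 hQ)).trans_le (inv_mul_volume_inter_le_maximalInd hE hr hx)

lemma maximalInd_le_mul_maximalInd (hE : MeasurableSet E) (hF : MeasurableSet F)
    {t C : ℝ≥0∞} (hCZ : ∀ (c : Fin n → ℝ) (r : ℝ), 0 < r → LowDensity E t c r →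
      volume (closedBall c r ∩ E) ≤ C * volume (closedBall c r ∩ F))
    {x : Fin n → ℝ} (hx : maximalInd E x ≤ t) :
    maximalInd E x ≤ C * maximalInd F x := by
  rw [maximalInd_eq hE]
  refine iSup_le fun c => iSup_le fun r => iSup₂_le fun hr hxc => ?_
  have hQ : LowDensity E t c r :=
    (lowDensity_iff hr).2 ((inv_mul_volume_inter_le_maximalInd hE hr hxc).trans hx)
  calc (volume (closedBall c r))⁻¹ * volume (closedBall c r ∩ E)
      ≤ (volume (closedBall c r))⁻¹ * (C * volume (closedBall c r ∩ F)) := by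
        gcongr; exact hCZ c r hr hQ
    _ = C * ((volume (closedBall c r))⁻¹ * volume (closedBall c r ∩ F)) := mul_left_comm _ _ _
    _ ≤ C * maximalInd F x := by gcongr; exact inv_mul_volume_inter_le_maximalInd hF hr hxc

end MaximalFunction

theorem stmt6_general {n : ℕ} (τ : ℝ) (hτ1 : τ < 1)
    (E : Set (Fin n → ℝ)) (hE : MeasurableSet E) :
    (∀ (c : Fin n → ℝ) (r : ℝ), 0 < r →
      volume (closedBall c r ∩ E) ≤ ENNReal.ofReal τ * volume (closedBall c r) →
      volume (closedBall c r ∩ E) ≤ ENNReal.ofReal (2 ^ n * τ) *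
        volume (closedBall c r ∩ {x | ENNReal.ofReal τ < maximalInd E x})) ∧
    (∀ x : Fin n → ℝ, maximalInd E x ≤ ENNReal.ofReal τ →
      maximalInd E x ≤ ENNReal.ofReal (2 ^ n * τ) *
        maximalInd {y | ENNReal.ofReal τ < maximalInd E y} x) := by
  have hF : MeasurableSet {y | ENNReal.ofReal τ < maximalInd E y} :=
    (isOpen_lt_maximal _ _).measurableSet
  have hCZ : ∀ (c : Fin n → ℝ) (r : ℝ), 0 < r → LowDensity E (ENNReal.ofReal τ) c r →
      volume (closedBall c r ∩ E) ≤ ENNReal.ofReal (2 ^ n * τ) *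
        volume (closedBall c r ∩ {x | ENNReal.ofReal τ < maximalInd E x}) := fun c r hr hQ => by
    rw [ENNReal.ofReal_mul (by positivity), ENNReal.ofReal_pow zero_le_two, ENNReal.ofReal_ofNat]
    simpa only [Fintype.card_fin] using
      volume_inter_le_of_lowDensity hE.nullMeasurableSet hF.nullMeasurableSet
        (fun _ _ => closedBall_subset_of_not_lowDensity hE) (ENNReal.ofReal_lt_one.2 hτ1) hr hQ
  exact ⟨hCZ, fun x hx => maximalInd_le_mul_maximalInd hE hF hCZ hx⟩

/-- Let `0 < τ < 1` and `E` measurable. (a) If a cube `Q` satisfies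
`|Q ∩ E| ≤ τ|Q|`, then `|Q ∩ E| ≤ 2^n τ |Q ∩ {Mχ_E > τ}|`. (b) Consequently, for
every `x` with `Mχ_E(x) ≤ τ`, `Mχ_E(x) ≤ 2^n τ · Mχ_{{Mχ_E > τ}}(x)`. -/
theorem stmt6 {n : ℕ} (τ : ℝ) (hτ0 : 0 < τ) (hτ1 : τ < 1)
    (E : Set (Fin n → ℝ)) (hE : MeasurableSet E) :
    (∀ (c : Fin n → ℝ) (r : ℝ), 0 < r →
      volume (closedBall c r ∩ E) ≤ ENNReal.ofReal τ * volume (closedBall c r) →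
      volume (closedBall c r ∩ E) ≤ ENNReal.ofReal (2 ^ n * τ) *
        volume (closedBall c r ∩ {x | ENNReal.ofReal τ < maximalInd E x})) ∧
    (∀ x : Fin n → ℝ, maximalInd E x ≤ ENNReal.ofReal τ →
      maximalInd E x ≤ ENNReal.ofReal (2 ^ n * τ) *
        maximalInd {y | ENNReal.ofReal τ < maximalInd E y} x) :=
  stmt6_general τ hτ1 E hE
end

section
/- Let {Q_j} be a family of pairwise disjoint cubes in ℝⁿ, let 0 < λ < 3^{-n}, and for each j let E_j ⊆ Q_j be measurable with |E_j| = λ|Q_j|. Set E = ∪_j E_j. Then {x : Mχ_E(x) > 3^n λ} ⊆ ∪_j 3Q_j. -/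
open MeasureTheory Metric Set
open scoped ENNReal

/-- Let `{Q_j}_{j∈J}` be pairwise disjoint cubes, `0 < λ < 3^{-n}`, and `E_j ⊆ Q_j`
measurable with `|E_j| = λ|Q_j|`. Setting `E = ∪_j E_j`, one has
`{Mχ_E > 3^n λ} ⊆ ∪_j 3Q_j`. -/
theorem stmt8 {n : ℕ} (J : Set ℕ) (c : ℕ → Fin n → ℝ) (ρ : ℕ → ℝ)
    (hρ : ∀ j ∈ J, 0 < ρ j)
    (hdisj : J.PairwiseDisjoint fun j => closedBall (c j) (ρ j))
    (l : ℝ) (hl0 : 0 < l) (hl1 : l < ((3:ℝ) ^ n)⁻¹)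
    (E : ℕ → Set (Fin n → ℝ)) (hEm : ∀ j ∈ J, MeasurableSet (E j))
    (hEQ : ∀ j ∈ J, E j ⊆ closedBall (c j) (ρ j))
    (hEvol : ∀ j ∈ J, volume (E j) = ENNReal.ofReal l * volume (closedBall (c j) (ρ j))) :
    {x | ENNReal.ofReal (3 ^ n * l) < maximalInd (⋃ j ∈ J, E j) x} ⊆
      ⋃ j ∈ J, closedBall (c j) (3 * ρ j) := by
  intro x hx
  by_contra hmem
  simp only [mem_iUnion, not_exists] at hmem
  simp only [mem_setOf_eq, maximalInd, maximal] at hx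
  obtain ⟨c0, hx⟩ := lt_iSup_iff.mp hx
  obtain ⟨r, hx⟩ := lt_iSup_iff.mp hx
  obtain ⟨hr, hx⟩ := lt_iSup_iff.mp hx
  obtain ⟨hxQ, hQ⟩ := lt_iSup_iff.mp hx
  set Q := closedBall c0 r with hQdef
  have hEmU : MeasurableSet (⋃ j ∈ J, E j) := MeasurableSet.biUnion J.to_countable hEm
  -- rewrite the integral as a measure
  have hint : ∫⁻ y in Q, (⋃ j ∈ J, E j).indicator 1 y = volume ((⋃ j ∈ J, E j) ∩ Q) := by
    rw [lintegral_indicator_one hEmU, Measure.restrict_apply hEmU]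
  rw [hint] at hQ
  have hQvol : volume Q = ENNReal.ofReal ((2 * r) ^ n) := by
    rw [hQdef, Real.volume_pi_closedBall c0 hr.le, Fintype.card_fin]
  have hQ0 : volume Q ≠ 0 := by
    rw [hQvol]
    simp only [ne_eq, ENNReal.ofReal_eq_zero, not_le]
    positivity
  have hQtop : volume Q ≠ ⊤ := by rw [hQvol]; exact ENNReal.ofReal_ne_top
  have hQ' : ENNReal.ofReal (3 ^ n * l) * volume Q < volume ((⋃ j ∈ J, E j) ∩ Q) := by
    rw [← ENNReal.div_eq_inv_mul] at hQ
    exact (ENNReal.lt_div_iff_mul_lt (Or.inl hQ0) (Or.inl hQtop)).mp hQ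
  -- key bound on each piece
  have key : ∀ j ∈ J, volume (E j ∩ Q) ≤
      ENNReal.ofReal l * volume (closedBall (c j) (ρ j) ∩ closedBall c0 (3 * r)) := by
    intro j hj
    rcases (E j ∩ Q).eq_empty_or_nonempty with h | ⟨y, hyE, hyQ⟩
    · simp [h]
    have hyQj : y ∈ closedBall (c j) (ρ j) := hEQ j hj hyE
    rw [mem_closedBall] at hyQj hyQ
    have hcc : dist (c j) c0 ≤ ρ j + r := by
      calc dist (c j) c0 ≤ dist (c j) y + dist y c0 := dist_triangle _ _ _
        _ ≤ ρ j + r := add_le_add (by rw [dist_comm]; exact hyQj) hyQ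
    have hρr : ρ j ≤ r := by
      by_contra hc
      push_neg at hc
      refine hmem j hj ?_
      rw [mem_closedBall]
      calc dist x (c j) ≤ dist x c0 + dist (c j) c0 := by
            rw [dist_comm (c j) c0]; exact dist_triangle _ _ _
        _ ≤ r + (ρ j + r) := add_le_add (mem_closedBall.mp hxQ) hcc
        _ ≤ 3 * ρ j := by linarith
    have hsub : closedBall (c j) (ρ j) ⊆ closedBall c0 (3 * r) := by
      intro z hz
      rw [mem_closedBall] at hz ⊢
      calc dist z c0 ≤ dist z (c j) + dist (c j) c0 := dist_triangle _ _ _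
        _ ≤ ρ j + (ρ j + r) := add_le_add hz hcc
        _ ≤ 3 * r := by linarith
    calc volume (E j ∩ Q) ≤ volume (E j) := measure_mono inter_subset_left
      _ = ENNReal.ofReal l * volume (closedBall (c j) (ρ j)) := hEvol j hj
      _ = ENNReal.ofReal l * volume (closedBall (c j) (ρ j) ∩ closedBall c0 (3 * r)) := by
          rw [inter_eq_left.mpr hsub]
  -- sum up
  have hUnion : (⋃ j ∈ J, E j) ∩ Q = ⋃ j ∈ J, (E j ∩ Q) := by
    rw [iUnion₂_inter]
  have hbound : volume ((⋃ j ∈ J, E j) ∩ Q) ≤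
      ENNReal.ofReal l * volume (⋃ j ∈ J, (closedBall (c j) (ρ j) ∩ closedBall c0 (3 * r))) := by
    rw [hUnion]
    calc volume (⋃ j ∈ J, (E j ∩ Q)) ≤ ∑' j : J, volume (E j ∩ Q) :=
          measure_biUnion_le volume J.to_countable _
      _ ≤ ∑' j : J, ENNReal.ofReal l * volume (closedBall (c j) (ρ j) ∩ closedBall c0 (3 * r)) :=
          ENNReal.tsum_le_tsum fun j => key j j.2
      _ = ENNReal.ofReal l *
          ∑' j : J, volume (closedBall (c j) (ρ j) ∩ closedBall c0 (3 * r)) :=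
          ENNReal.tsum_mul_left
      _ = ENNReal.ofReal l *
          volume (⋃ j ∈ J, (closedBall (c j) (ρ j) ∩ closedBall c0 (3 * r))) := by
          rw [measure_biUnion J.to_countable
            (hdisj.mono_on fun j hj => inter_subset_left)
            (fun j hj => (measurableSet_closedBall).inter measurableSet_closedBall)]
  have hfinal : ENNReal.ofReal l * volume (⋃ j ∈ J,
      (closedBall (c j) (ρ j) ∩ closedBall c0 (3 * r))) ≤
      ENNReal.ofReal (3 ^ n * l) * volume Q := by
    calc ENNReal.ofReal l * volume (⋃ j ∈ J, (closedBall (c j) (ρ j) ∩ closedBall c0 (3 * r)))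
        ≤ ENNReal.ofReal l * volume (closedBall c0 (3 * r)) := by
          gcongr
          exact iUnion₂_subset fun j hj => inter_subset_right
      _ = ENNReal.ofReal (3 ^ n * l) * volume Q := by
          rw [Real.volume_pi_closedBall c0 (by linarith : (0:ℝ) ≤ 3 * r), Fintype.card_fin,
            hQvol, ← ENNReal.ofReal_mul hl0.le, ← ENNReal.ofReal_mul (by positivity)]
          congr 1
          have h6 : (6:ℝ) ^ n = 2 ^ n * 3 ^ n := by rw [← mul_pow]; norm_num
          ring_nf
          rw [h6]; ring
  exact absurd hQ' (not_lt.mpr (hbound.trans hfinal))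
end

section
/- Let 𝒮 be an η-sparse family of dyadic cubes contained in a cube Q₀ (i.e., for each Q ∈ 𝒮 the sets E_Q = Q \ ∪{Q' ∈ 𝒮 : Q' ⊊ Q} satisfy |E_Q| ≥ η|Q| and are pairwise disjoint). Then for every weight w, every r > 1, and 0 < 1/r < 1, Σ_{Q∈𝒮} ((1/|Q|)∫_Q w^r)^{1/r} |Q| ≤ C_{r,n,η} ((1/|Q₀|)∫_{Q₀} w^r)^{1/r} |Q₀|. -/
/-!
Write `a_Q` for the average of `f = w ^ r` over `Q`, `A` for that over `Q₀`, and `δ = 1 / r`.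
Locating `a_Q` between consecutive dyadic levels gives
`a_Q ^ δ ≤ A ^ δ + ∑_k 2 ^ ((k + 1) δ) A ^ δ [2 ^ k A ≤ a_Q]`. The disjoint sets `E_Q` bound the
total measure of any subfamily of the cubes by `η⁻¹` times the measure of its union, and for the
cubes with `a_Q ≥ t` this union is covered by its maximal members, which are disjoint, so it has
measure at most `t⁻¹ ∫_{Q₀} f`. This weak `(1,1)` bound for the dyadic maximal function takes the
place of Kolmogorov's inequality. Level `k` then contributes
`η⁻¹ 2 ^ δ (2 ^ (δ - 1)) ^ k A ^ δ |Q₀|`, a convergent geometric series because `δ < 1`.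
-/

open MeasureTheory Metric Set Function
open scoped ENNReal

theorem ENNReal.rpow_le_add_tsum_dyadic {δ : ℝ} (hδ : 0 ≤ δ) {A x : ℝ≥0∞} (hA : A ≠ 0)
    (hx : x ≠ ∞) :
    x ^ δ ≤ A ^ δ + ∑' k : ℕ, if 2 ^ k * A ≤ x then (2 ^ δ) ^ (k + 1) * A ^ δ else 0 := by
  rcases le_or_gt x A with hxA | hAx
  · exact le_add_right (ENNReal.rpow_le_rpow hxA hδ)
  have hex : ∃ m : ℕ, x < 2 ^ m * A := by
    obtain ⟨m, hm⟩ := ENNReal.exists_nat_mul_gt hA hx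
    exact ⟨m, hm.trans_le (mul_le_mul_left (by exact_mod_cast Nat.lt_two_pow_self.le) A)⟩
  obtain ⟨K, hK⟩ : ∃ K, Nat.find hex = K + 1 := Nat.exists_eq_succ_of_ne_zero fun h => by
    simpa [h] using hAx.trans (Nat.find_spec hex)
  have hlow : 2 ^ K * A ≤ x := not_lt.1 (Nat.find_min hex (by omega))
  have hup : x < 2 ^ (K + 1) * A := hK ▸ Nat.find_spec hex
  calc x ^ δ ≤ (2 ^ (K + 1) * A) ^ δ := ENNReal.rpow_le_rpow hup.le hδ
    _ = (2 ^ δ) ^ (K + 1) * A ^ δ := by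
        rw [ENNReal.mul_rpow_of_nonneg _ _ hδ, ← ENNReal.rpow_natCast_mul, mul_comm (_ : ℝ),
          ENNReal.rpow_mul_natCast]
    _ ≤ ∑' k : ℕ, if 2 ^ k * A ≤ x then (2 ^ δ) ^ (k + 1) * A ^ δ else 0 :=
        (if_pos hlow).symm.trans_le (ENNReal.le_tsum K)
    _ ≤ _ := le_add_self

variable {X ι : Type*} {Q : ι → Set X}

def IsLaminar (Q : ι → Set X) : Prop :=
  ∀ i j, Q i ⊆ Q j ∨ Q j ⊆ Q i ∨ Disjoint (Q i) (Q j)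

/-- The set `E_Q` of the paper. -/
def sparsePart (Q : ι → Set X) (j : ι) : Set X :=
  Q j \ ⋃ (i) (_ : Q i ⊂ Q j), Q i

theorem sparsePart_subset (j : ι) : sparsePart Q j ⊆ Q j := sdiff_subset

theorem sparsePart_subtype (Q : ι → Set X) (J : Set ι) (j : J) :
    sparsePart (fun i : J => Q i) j = Q j \ ⋃ i ∈ {i ∈ J | Q i ⊂ Q j}, Q i := by
  ext x
  simp [sparsePart, imp.swap]

theorem disjoint_sparsePart_of_ssubset {i j : ι} (h : Q i ⊂ Q j) :
    Disjoint (sparsePart Q i) (sparsePart Q j) :=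
  (disjoint_sdiff_right.mono_left (subset_biUnion_of_mem (u := Q) h)).mono_left
    (sparsePart_subset i)

theorem IsLaminar.pairwise_disjoint_sparsePart (hQ : IsLaminar Q) (hinj : Injective Q) :
    Pairwise (Disjoint on sparsePart Q) := by
  intro i j hij
  have hne : Q i ≠ Q j := hinj.ne hij
  rcases hQ i j with h | h | h
  · exact disjoint_sparsePart_of_ssubset (h.ssubset_of_ne hne)
  · exact (disjoint_sparsePart_of_ssubset (h.ssubset_of_ne hne.symm)).symm
  · exact h.mono (sparsePart_subset i) (sparsePart_subset j)

variable [MeasurableSpace X] {μ : Measure X}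

theorem measurableSet_sparsePart [Countable ι] (hQm : ∀ i, MeasurableSet (Q i)) (j : ι) :
    MeasurableSet (sparsePart Q j) :=
  (hQm j).diff (.iUnion fun i => .iUnion fun _ => hQm i)

theorem IsLaminar.mul_tsum_measure_le_of_sparse [Countable ι] (hQ : IsLaminar Q)
    (hQm : ∀ i, MeasurableSet (Q i)) (hinj : Injective Q) {c : ℝ≥0∞}
    (hsparse : ∀ j, c * μ (Q j) ≤ μ (sparsePart Q j)) (s : Set ι) :
    c * ∑' j : s, μ (Q j) ≤ μ (⋃ j : s, Q j) :=
  calc c * ∑' j : s, μ (Q j) ≤ ∑' j : s, μ (sparsePart Q j) := by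
        rw [← ENNReal.tsum_mul_left]
        exact ENNReal.tsum_le_tsum fun j => hsparse j
    _ = μ (⋃ j : s, sparsePart Q j) :=
        (measure_iUnion ((hQ.pairwise_disjoint_sparsePart hinj).comp_of_injective
          Subtype.val_injective) fun j => measurableSet_sparsePart hQm j).symm
    _ ≤ μ (⋃ j : s, Q j) := measure_mono (iUnion_mono fun j => sparsePart_subset (Q := Q) j)

theorem IsLaminar.tsum_measure_le_of_sparse [Countable ι] (hQ : IsLaminar Q)
    (hQm : ∀ i, MeasurableSet (Q i)) (hinj : Injective Q) {c : ℝ≥0∞} (hc₀ : c ≠ 0) (hc : c ≠ ∞)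
    (hsparse : ∀ j, c * μ (Q j) ≤ μ (sparsePart Q j)) :
    ∑' j, μ (Q j) ≤ c⁻¹ * μ (⋃ j, Q j) := by
  have h := hQ.mul_tsum_measure_le_of_sparse hQm hinj hsparse univ
  rw [tsum_univ (f := fun j => μ (Q j))] at h
  calc ∑' j, μ (Q j) = c⁻¹ * (c * ∑' j, μ (Q j)) := (ENNReal.inv_mul_cancel_left hc₀ hc).symm
    _ ≤ c⁻¹ * μ (⋃ j, Q j) := by
        gcongr
        exact h.trans (measure_mono (iUnion_subset fun j => subset_iUnion Q j))

theorem IsLaminar.mul_measure_biUnion_finset_le_lintegral (hQ : IsLaminar Q)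
    (hQm : ∀ i, MeasurableSet (Q i)) {f : X → ℝ≥0∞} {t : ℝ≥0∞}
    (ht : ∀ i, t * μ (Q i) ≤ ∫⁻ x in Q i, f x ∂μ) (F : Finset ι) :
    t * μ (⋃ i ∈ F, Q i) ≤ ∫⁻ x in ⋃ i ∈ F, Q i, f x ∂μ := by
  classical
  induction F using Finset.strongInduction with
  | H F ih =>
  rcases F.eq_empty_or_nonempty with rfl | hF
  · simp
  obtain ⟨i₀, hi₀, hmax⟩ := F.exists_maximalFor Q hF
  set F' := F.filter fun i => ¬ Q i ⊆ Q i₀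
  have hdisj : Disjoint (Q i₀) (⋃ i ∈ F', Q i) := by
    refine disjoint_iUnion₂_right.2 fun i hi => ?_
    obtain ⟨hiF, hsub⟩ := Finset.mem_filter.1 hi
    rcases hQ i i₀ with h | h | h
    · exact absurd h hsub
    · exact absurd (hmax hiF h) hsub
    · exact h.symm
  have hunion : ⋃ i ∈ F, Q i = Q i₀ ∪ ⋃ i ∈ F', Q i := by
    refine (iUnion₂_subset fun i hi => ?_).antisymm
      (union_subset (subset_biUnion_of_mem hi₀) (biUnion_subset_biUnion_left ?_))
    · by_cases h : Q i ⊆ Q i₀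
      · exact h.trans subset_union_left
      · exact (subset_biUnion_of_mem (Finset.mem_filter.2 ⟨hi, h⟩)).trans subset_union_right
    · exact_mod_cast Finset.filter_subset _ F
  have hF' : F' ⊂ F := Finset.filter_ssubset.2 ⟨i₀, hi₀, not_not.2 subset_rfl⟩
  have hmeas : MeasurableSet (⋃ i ∈ F', Q i) := .biUnion F'.countable_toSet fun i _ => hQm i
  calc t * μ (⋃ i ∈ F, Q i) = t * μ (Q i₀) + t * μ (⋃ i ∈ F', Q i) := by
        rw [hunion, measure_union hdisj hmeas, mul_add]
    _ ≤ (∫⁻ x in Q i₀, f x ∂μ) + ∫⁻ x in ⋃ i ∈ F', Q i, f x ∂μ := add_le_add (ht i₀) (ih F' hF')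
    _ = ∫⁻ x in ⋃ i ∈ F, Q i, f x ∂μ := by rw [hunion, lintegral_union hmeas hdisj]

theorem IsLaminar.mul_measure_iUnion_le_lintegral [Countable ι] (hQ : IsLaminar Q)
    (hQm : ∀ i, MeasurableSet (Q i)) {f : X → ℝ≥0∞} {t : ℝ≥0∞}
    (ht : ∀ i, t * μ (Q i) ≤ ∫⁻ x in Q i, f x ∂μ) :
    t * μ (⋃ i, Q i) ≤ ∫⁻ x in ⋃ i, Q i, f x ∂μ :=
  calc t * μ (⋃ i, Q i) = ⨆ F : Finset ι, t * μ (⋃ i ∈ F, Q i) := by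
        rw [iUnion_eq_iUnion_finset, Monotone.measure_iUnion, ENNReal.mul_iSup]
        exact fun F F' h => biUnion_subset_biUnion_left h
    _ ≤ ∫⁻ x in ⋃ i, Q i, f x ∂μ := iSup_le fun F =>
        (hQ.mul_measure_biUnion_finset_le_lintegral hQm ht F).trans
          (lintegral_mono_set (iUnion₂_subset fun i _ => subset_iUnion Q i))

theorem IsLaminar.tsum_measure_levelSet_le_of_sparse [Countable ι] (hQ : IsLaminar Q)
    (hQm : ∀ i, MeasurableSet (Q i)) (hinj : Injective Q) {c : ℝ≥0∞} (hc₀ : c ≠ 0) (hc : c ≠ ∞)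
    (hsparse : ∀ j, c * μ (Q j) ≤ μ (sparsePart Q j)) (f : X → ℝ≥0∞) {t : ℝ≥0∞}
    (ht₀ : t ≠ 0) (ht : t ≠ ∞) :
    (∑' j, if t ≤ (μ (Q j))⁻¹ * ∫⁻ x in Q j, f x ∂μ then μ (Q j) else 0) ≤
      c⁻¹ * (t⁻¹ * ∫⁻ x in ⋃ j, Q j, f x ∂μ) := by
  set s := {j | t ≤ (μ (Q j))⁻¹ * ∫⁻ x in Q j, f x ∂μ}
  have hsum : (∑' j, if t ≤ (μ (Q j))⁻¹ * ∫⁻ x in Q j, f x ∂μ then μ (Q j) else 0) =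
      ∑' j : s, μ (Q j) := by
    rw [tsum_subtype s fun j => μ (Q j)]
    simp only [indicator_apply, s, mem_ofPred_eq]
  have hlevel (j : s) : t * μ (Q j) ≤ ∫⁻ x in Q j, f x ∂μ :=
    ENNReal.mul_le_of_le_div (by rw [ENNReal.div_eq_inv_mul]; exact j.2)
  have hQs : IsLaminar fun j : s => Q j := fun i j => hQ i j
  calc (∑' j, if t ≤ (μ (Q j))⁻¹ * ∫⁻ x in Q j, f x ∂μ then μ (Q j) else 0)
      = c⁻¹ * (t⁻¹ * (t * (c * ∑' j : s, μ (Q j)))) := by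
        rw [hsum, ENNReal.inv_mul_cancel_left ht₀ ht, ENNReal.inv_mul_cancel_left hc₀ hc]
    _ ≤ c⁻¹ * (t⁻¹ * ∫⁻ x in ⋃ j, Q j, f x ∂μ) := by
        gcongr
        calc t * (c * ∑' j : s, μ (Q j)) ≤ t * μ (⋃ j : s, Q j) := by
              gcongr
              exact hQ.mul_tsum_measure_le_of_sparse hQm hinj hsparse s
          _ ≤ ∫⁻ x in ⋃ j : s, Q j, f x ∂μ :=
              hQs.mul_measure_iUnion_le_lintegral (fun j => hQm j) hlevel
          _ ≤ ∫⁻ x in ⋃ j, Q j, f x ∂μ :=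
              lintegral_mono_set (iUnion_subset fun j => subset_iUnion Q j)

theorem rpow_setAverage_mul_measure_le_add_tsum_dyadic {δ : ℝ} (hδ : 0 ≤ δ) {A : ℝ≥0∞}
    (hA : A ≠ 0) {s : Set X} (f : X → ℝ≥0∞) (hf : ∫⁻ x in s, f x ∂μ ≠ ∞) :
    ((μ s)⁻¹ * ∫⁻ x in s, f x ∂μ) ^ δ * μ s ≤ A ^ δ * μ s + ∑' k : ℕ,
      (2 ^ δ) ^ (k + 1) * A ^ δ * (if 2 ^ k * A ≤ (μ s)⁻¹ * ∫⁻ x in s, f x ∂μ then μ s else 0) := by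
  rcases eq_or_ne (μ s) 0 with hs | hs
  · simp [hs]
  set a := (μ s)⁻¹ * ∫⁻ x in s, f x ∂μ
  calc a ^ δ * μ s
      ≤ (A ^ δ + ∑' k : ℕ, if 2 ^ k * A ≤ a then (2 ^ δ) ^ (k + 1) * A ^ δ else 0) * μ s := by
        gcongr
        exact ENNReal.rpow_le_add_tsum_dyadic hδ hA
          (ENNReal.mul_ne_top (ENNReal.inv_ne_top.2 hs) hf)
    _ = _ := by simp only [add_mul, ← ENNReal.tsum_mul_right, ite_mul, zero_mul, mul_ite, mul_zero]

noncomputable def sparseConst (c : ℝ≥0∞) (δ : ℝ) : ℝ≥0∞ :=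
  c⁻¹ * (1 + 2 ^ δ * ∑' k : ℕ, (2 ^ δ * 2⁻¹) ^ k)

theorem sparseConst_pos {c : ℝ≥0∞} (hc : c ≠ ∞) (δ : ℝ) : 0 < sparseConst c δ :=
  ENNReal.mul_pos (ENNReal.inv_ne_zero.2 hc) (by simp)

theorem sparseConst_lt_top {c : ℝ≥0∞} (hc : c ≠ 0) {δ : ℝ} (hδ : δ < 1) :
    sparseConst c δ < ∞ := by
  have hq : (2 : ℝ≥0∞) ^ δ < 2 := by
    simpa using ENNReal.rpow_lt_rpow_of_exponent_lt (by norm_num) ENNReal.ofNat_ne_top hδ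
  have hratio : (2 : ℝ≥0∞) ^ δ * 2⁻¹ < 1 := by
    rw [← div_eq_mul_inv]
    exact ENNReal.div_lt_of_lt_mul' (by simpa using hq)
  have hsum : ∑' k : ℕ, ((2 : ℝ≥0∞) ^ δ * 2⁻¹) ^ k ≠ ∞ := by
    rw [ENNReal.tsum_geometric]
    exact ENNReal.inv_ne_top.2 (tsub_pos_iff_lt.2 hratio).ne'
  exact ENNReal.mul_lt_top (ENNReal.inv_lt_top.2 (pos_iff_ne_zero.2 hc))
    (ENNReal.add_lt_top.2 ⟨ENNReal.one_lt_top, ENNReal.mul_lt_top (hq.trans_le le_top)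
      (lt_top_iff_ne_top.2 hsum)⟩)

theorem add_tsum_dyadic_eq_sparseConst_mul (c B V : ℝ≥0∞) (δ : ℝ) :
    B * (c⁻¹ * V) + ∑' k : ℕ, (2 ^ δ) ^ (k + 1) * B * (c⁻¹ * (2⁻¹ ^ k * V)) =
      sparseConst c δ * B * V := by
  have hterm (k : ℕ) : ((2 : ℝ≥0∞) ^ δ) ^ (k + 1) * B * (c⁻¹ * (2⁻¹ ^ k * V)) =
      c⁻¹ * 2 ^ δ * B * V * (2 ^ δ * 2⁻¹) ^ k := by ring
  rw [tsum_congr hterm, ENNReal.tsum_mul_left, sparseConst]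
  ring

theorem IsLaminar.tsum_rpow_setAverage_mul_measure_le_of_sparse [Countable ι] (hQ : IsLaminar Q)
    (hQm : ∀ i, MeasurableSet (Q i)) (hinj : Injective Q) {c : ℝ≥0∞} (hc₀ : c ≠ 0)
    (hc : c ≠ ∞) (hsparse : ∀ j, c * μ (Q j) ≤ μ (sparsePart Q j)) {Q₀ : Set X}
    (hQQ₀ : ∀ j, Q j ⊆ Q₀) (hQ₀ : μ Q₀ ≠ 0) (hQ₀' : μ Q₀ ≠ ∞) {δ : ℝ} (hδ : 0 < δ)
    (f : X → ℝ≥0∞) :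
    ∑' j, ((μ (Q j))⁻¹ * ∫⁻ x in Q j, f x ∂μ) ^ δ * μ (Q j) ≤
      sparseConst c δ * ((μ Q₀)⁻¹ * ∫⁻ x in Q₀, f x ∂μ) ^ δ * μ Q₀ := by
  set V := μ Q₀
  set T := ∫⁻ x in Q₀, f x ∂μ
  set A := V⁻¹ * T
  set a : ι → ℝ≥0∞ := fun j => (μ (Q j))⁻¹ * ∫⁻ x in Q j, f x ∂μ
  have hTj (j : ι) : ∫⁻ x in Q j, f x ∂μ ≤ T := lintegral_mono_set (hQQ₀ j)
  rcases eq_or_ne T 0 with hT₀ | hT₀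
  · have hzero (j : ι) : ∫⁻ x in Q j, f x ∂μ = 0 := le_zero_iff.1 (hT₀ ▸ hTj j)
    simp [hzero, ENNReal.zero_rpow_of_pos hδ]
  rcases eq_or_ne T ∞ with hT | hT
  · simp [A, hT, ENNReal.top_rpow_of_pos hδ, ENNReal.mul_top, (sparseConst_pos hc δ).ne', hQ₀,
      hQ₀']
  have hA₀ : A ≠ 0 := mul_ne_zero (ENNReal.inv_ne_zero.2 hQ₀') hT₀
  have hA : A ≠ ∞ := ENNReal.mul_ne_top (ENNReal.inv_ne_top.2 hQ₀) hT
  have hAT : A⁻¹ * T = V := by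
    rw [ENNReal.mul_inv (.inl (ENNReal.inv_ne_zero.2 hQ₀')) (.inl (ENNReal.inv_ne_top.2 hQ₀)),
      inv_inv, mul_assoc, ENNReal.inv_mul_cancel hT₀ hT, mul_one]
  have hlayer (j : ι) : a j ^ δ * μ (Q j) ≤ A ^ δ * μ (Q j) +
      ∑' k : ℕ, (2 ^ δ) ^ (k + 1) * A ^ δ * (if 2 ^ k * A ≤ a j then μ (Q j) else 0) :=
    rpow_setAverage_mul_measure_le_add_tsum_dyadic hδ.le hA₀ f ((hTj j).trans_lt hT.lt_top).ne
  have htotal : ∑' j, μ (Q j) ≤ c⁻¹ * V :=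
    (hQ.tsum_measure_le_of_sparse hQm hinj hc₀ hc hsparse).trans
      (by gcongr; exact measure_mono (iUnion_subset hQQ₀))
  have hlevel (k : ℕ) :
      (∑' j, if 2 ^ k * A ≤ a j then μ (Q j) else 0) ≤ c⁻¹ * (2⁻¹ ^ k * V) := by
    have h2k : (2 : ℝ≥0∞) ^ k ≠ ∞ := ENNReal.pow_ne_top ENNReal.ofNat_ne_top
    refine (hQ.tsum_measure_levelSet_le_of_sparse hQm hinj hc₀ hc hsparse f
      (mul_ne_zero (pow_ne_zero k two_ne_zero) hA₀) (ENNReal.mul_ne_top h2k hA)).trans ?_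
    rw [← hAT, ENNReal.mul_inv (.inl (pow_ne_zero k two_ne_zero)) (.inl h2k), ENNReal.inv_pow,
      mul_assoc]
    gcongr
    exact lintegral_mono_set (iUnion_subset hQQ₀)
  calc ∑' j, a j ^ δ * μ (Q j)
      ≤ ∑' j, (A ^ δ * μ (Q j) +
          ∑' k : ℕ, (2 ^ δ) ^ (k + 1) * A ^ δ * (if 2 ^ k * A ≤ a j then μ (Q j) else 0)) :=
        ENNReal.tsum_le_tsum hlayer
    _ = A ^ δ * ∑' j, μ (Q j) +
          ∑' k : ℕ, (2 ^ δ) ^ (k + 1) * A ^ δ * ∑' j, (if 2 ^ k * A ≤ a j then μ (Q j) else 0) := by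
        rw [ENNReal.tsum_add, ENNReal.tsum_mul_left, ENNReal.tsum_comm]
        simp only [ENNReal.tsum_mul_left]
    _ ≤ A ^ δ * (c⁻¹ * V) + ∑' k : ℕ, (2 ^ δ) ^ (k + 1) * A ^ δ * (c⁻¹ * (2⁻¹ ^ k * V)) := by
        gcongr with k
        exact hlevel k
    _ = sparseConst c δ * A ^ δ * V := add_tsum_dyadic_eq_sparseConst_mul c _ V δ

theorem stmt10_general (n : ℕ) (r η : ℝ) (hr : 1 < r) (hη0 : 0 < η) :
    ∃ C : ℝ≥0∞, 0 < C ∧ C < ∞ ∧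
      ∀ (c₀ : Fin n → ℝ) (ρ₀ : ℝ), 0 < ρ₀ →
      ∀ (J : Set ℕ) (Q : ℕ → Set (Fin n → ℝ)),
        J.InjOn Q →
        (∀ j ∈ J, ∃ (c : Fin n → ℝ) (ρ : ℝ), 0 < ρ ∧ Q j = closedBall c ρ) →
        (∀ j ∈ J, Q j ⊆ closedBall c₀ ρ₀) →
        (∀ i ∈ J, ∀ j ∈ J, Q i ⊆ Q j ∨ Q j ⊆ Q i ∨ Disjoint (Q i) (Q j)) →
        (∀ j ∈ J, ENNReal.ofReal η * volume (Q j) ≤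
          volume (Q j \ ⋃ i ∈ {i ∈ J | Q i ⊂ Q j}, Q i)) →
        ((fun j => Q j \ ⋃ i ∈ {i ∈ J | Q i ⊂ Q j}, Q i) '' J).PairwiseDisjoint id →
        ∀ w : (Fin n → ℝ) → ℝ≥0∞, Measurable w →
          ∑' j : J, ((volume (Q j))⁻¹ * ∫⁻ y in Q j, (w y) ^ r) ^ (1/r) * volume (Q j) ≤
            C * ((volume (closedBall c₀ ρ₀))⁻¹ *
                ∫⁻ y in closedBall c₀ ρ₀, (w y) ^ r) ^ (1/r) *
              volume (closedBall c₀ ρ₀) := by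
  have hη : ENNReal.ofReal η ≠ 0 := (ENNReal.ofReal_pos.2 hη0).ne'
  refine ⟨sparseConst (ENNReal.ofReal η) (1 / r), sparseConst_pos ENNReal.ofReal_ne_top _,
    sparseConst_lt_top hη ((div_lt_one (by linarith)).2 hr), ?_⟩
  intro c₀ ρ₀ hρ₀ J Q hinj hcube hsub hnest hsparse _ w _
  have hQm (j : J) : MeasurableSet (Q j) := by
    obtain ⟨c, ρ, -, hj⟩ := hcube j j.2
    exact hj ▸ measurableSet_closedBall
  have hQ : IsLaminar fun j : J => Q j := fun i j => hnest i i.2 j j.2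
  exact hQ.tsum_rpow_setAverage_mul_measure_le_of_sparse hQm hinj.injective hη
    ENNReal.ofReal_ne_top (fun j => (hsparse j j.2).trans_eq (by rw [sparsePart_subtype]))
    (fun j => hsub j j.2) (measure_closedBall_pos volume c₀ hρ₀).ne'
    measure_closedBall_lt_top.ne (by positivity) _

/-- For an `η`-sparse family of (dyadic-like, i.e. nested-or-disjoint) cubes
`{Q_j}_{j∈J}` contained in a cube `Q₀` — meaning the sets
`E_j = Q_j \ ∪{Q_i : Q_i ⊊ Q_j}` satisfy `|E_j| ≥ η|Q_j|` and are pairwise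
disjoint — one has, for every weight `w` and `r > 1`,
`Σ_j ((1/|Q_j|)∫_{Q_j} w^r)^{1/r} |Q_j| ≤ C_{r,n,η} ((1/|Q₀|)∫_{Q₀} w^r)^{1/r} |Q₀|`. -/
theorem stmt10 (n : ℕ) (r η : ℝ) (hr : 1 < r) (hη0 : 0 < η) (hη1 : η < 1) :
    ∃ C : ℝ≥0∞, 0 < C ∧ C < ∞ ∧
      ∀ (c₀ : Fin n → ℝ) (ρ₀ : ℝ), 0 < ρ₀ →
      ∀ (J : Set ℕ) (Q : ℕ → Set (Fin n → ℝ)),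
        J.InjOn Q →
        (∀ j ∈ J, ∃ (c : Fin n → ℝ) (ρ : ℝ), 0 < ρ ∧ Q j = closedBall c ρ) →
        (∀ j ∈ J, Q j ⊆ closedBall c₀ ρ₀) →
        (∀ i ∈ J, ∀ j ∈ J, Q i ⊆ Q j ∨ Q j ⊆ Q i ∨ Disjoint (Q i) (Q j)) →
        (∀ j ∈ J, ENNReal.ofReal η * volume (Q j) ≤
          volume (Q j \ ⋃ i ∈ {i ∈ J | Q i ⊂ Q j}, Q i)) →
        ((fun j => Q j \ ⋃ i ∈ {i ∈ J | Q i ⊂ Q j}, Q i) '' J).PairwiseDisjoint id →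
        ∀ w : (Fin n → ℝ) → ℝ≥0∞, Measurable w →
          ∑' j : J, ((volume (Q j))⁻¹ * ∫⁻ y in Q j, (w y) ^ r) ^ (1/r) * volume (Q j) ≤
            C * ((volume (closedBall c₀ ρ₀))⁻¹ *
                ∫⁻ y in closedBall c₀ ρ₀, (w y) ^ r) ^ (1/r) *
              volume (closedBall c₀ ρ₀) :=
  stmt10_general n r η hr hη0
end
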